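/- arXiv:2605.19141 — 3 statements merged into one kernel-verified Lean document; each statement's English description precedes it below -/
import Mathlib

section
/- Let W, D be n×n real matrices with nonnegative entries and let α, β ≥ 0. For every s ∈ S = {s ∈ ℝ^n : ‖s − 1‖_∞ ≤ 1} (so that all entries of s lie in [0, 2]), the GRASP operator satisfies ‖G(s) − 1‖_∞ ≤ (β‖D‖₁ + α‖W‖₁)·‖s‖_∞, where 1 denotes the all-ones vector. -/
open Finset

/-- Maximum absolute column sum norm `‖A‖₁ = max_j ∑_i |A_{ij}|`. -/
noncomputable def matNorm1 {n : ℕ} (A : Matrix (Fin n) (Fin n) ℝ) : ℝ :=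
  ⨆ j, ∑ i, |A i j|

/-- The GRASP operator `G(s)_i = (1 + β (Dᵀ s)_i) / (1 + α (Wᵀ s)_i)`. -/
noncomputable def grasp {n : ℕ} (W D : Matrix (Fin n) (Fin n) ℝ) (α β : ℝ)
    (s : Fin n → ℝ) : Fin n → ℝ :=
  fun i => (1 + β * ∑ k, D k i * s k) / (1 + α * ∑ k, W k i * s k)

/-
On `S` every entry of `s` is nonnegative, so `a = (Wᵀ s)_i ≥ 0`. With `b = (Dᵀ s)_i` one has
`G(s)_i - 1 = (β b - α a) / (1 + α a)`, whose denominator is at least `1`, hence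
`|G(s)_i - 1| ≤ β |b| + α a`; both terms are bounded by the column-sum norm times `‖s‖_∞`.
-/

lemma sum_abs_le_matNorm1 {n : ℕ} (A : Matrix (Fin n) (Fin n) ℝ) (j : Fin n) :
    ∑ i, |A i j| ≤ matNorm1 A :=
  le_ciSup (f := fun j => ∑ i, |A i j|) (Set.finite_range _).bddAbove j

lemma matNorm1_nonneg {n : ℕ} (A : Matrix (Fin n) (Fin n) ℝ) : 0 ≤ matNorm1 A :=
  Real.iSup_nonneg fun _ => sum_nonneg fun _ _ => abs_nonneg _

lemma abs_sum_mul_le_matNorm1_mul_norm {n : ℕ} (A : Matrix (Fin n) (Fin n) ℝ)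
    (s : Fin n → ℝ) (j : Fin n) : |∑ i, A i j * s i| ≤ matNorm1 A * ‖s‖ :=
  calc |∑ i, A i j * s i| ≤ ∑ i, |A i j| * ‖s‖ := by
        refine (abs_sum_le_sum_abs _ _).trans (sum_le_sum fun i _ => ?_)
        rw [abs_mul]
        exact mul_le_mul_of_nonneg_left (norm_le_pi_norm s i) (abs_nonneg _)
    _ = (∑ i, |A i j|) * ‖s‖ := (sum_mul _ _ _).symm
    _ ≤ matNorm1 A * ‖s‖ := mul_le_mul_of_nonneg_right (sum_abs_le_matNorm1 A j) (norm_nonneg s)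

lemma nonneg_of_norm_sub_one_le_one {ι : Type*} [Fintype ι] {s : ι → ℝ} (hs : ‖s - 1‖ ≤ 1)
    (i : ι) : 0 ≤ s i := by
  have h : |s i - 1| ≤ 1 := by simpa using (norm_le_pi_norm (s - 1) i).trans hs
  linarith [(abs_le.mp h).1]

lemma abs_div_one_add_sub_one_le {x y : ℝ} (hx : 0 ≤ x) :
    |(1 + y) / (1 + x) - 1| ≤ |y| + x := by
  have hden : (1 : ℝ) ≤ 1 + x := by linarith
  have hsplit : (1 + y) / (1 + x) - 1 = (y - x) / (1 + x) := by
    field_simp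
    ring
  calc |(1 + y) / (1 + x) - 1| = |y - x| / (1 + x) := by
        rw [hsplit, abs_div, abs_of_pos (show 0 < 1 + x by linarith)]
    _ ≤ |y - x| := div_le_self (abs_nonneg _) hden
    _ ≤ |y| + |x| := abs_sub y x
    _ = |y| + x := by rw [abs_of_nonneg hx]

theorem grasp_dist_one_bound_general {n : ℕ} (W D : Matrix (Fin n) (Fin n) ℝ)
    (hW : ∀ i j, 0 ≤ W i j)
    (α β : ℝ) (hα : 0 ≤ α) (hβ : 0 ≤ β)
    (s : Fin n → ℝ) (hs : ‖s - 1‖ ≤ 1) :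
    ‖grasp W D α β s - 1‖ ≤ (β * matNorm1 D + α * matNorm1 W) * ‖s‖ := by
  have hbound_nonneg : 0 ≤ (β * matNorm1 D + α * matNorm1 W) * ‖s‖ := by
    have := matNorm1_nonneg D
    have := matNorm1_nonneg W
    positivity
  refine (pi_norm_le_iff_of_nonneg hbound_nonneg).2 fun i => ?_
  have ha : 0 ≤ ∑ k, W k i * s k :=
    sum_nonneg fun k _ => mul_nonneg (hW k i) (nonneg_of_norm_sub_one_le_one hs k)
  have hWs := (le_abs_self _).trans (abs_sum_mul_le_matNorm1_mul_norm W s i)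
  have hDs := abs_sum_mul_le_matNorm1_mul_norm D s i
  calc ‖grasp W D α β s i - 1‖
      ≤ |β * ∑ k, D k i * s k| + α * ∑ k, W k i * s k :=
        abs_div_one_add_sub_one_le (mul_nonneg hα ha)
    _ ≤ β * (matNorm1 D * ‖s‖) + α * (matNorm1 W * ‖s‖) := by
        rw [abs_mul, abs_of_nonneg hβ]
        gcongr
    _ = (β * matNorm1 D + α * matNorm1 W) * ‖s‖ := by ring

/-- For nonnegative matrices `W, D` and `α, β ≥ 0`, every `s` with `‖s - 1‖_∞ ≤ 1`
satisfies `‖G(s) - 1‖_∞ ≤ (β‖D‖₁ + α‖W‖₁) ‖s‖_∞`. -/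
theorem grasp_dist_one_bound {n : ℕ} (W D : Matrix (Fin n) (Fin n) ℝ)
    (hW : ∀ i j, 0 ≤ W i j) (hD : ∀ i j, 0 ≤ D i j)
    (α β : ℝ) (hα : 0 ≤ α) (hβ : 0 ≤ β)
    (s : Fin n → ℝ) (hs : ‖s - 1‖ ≤ 1) :
    ‖grasp W D α β s - 1‖ ≤ (β * matNorm1 D + α * matNorm1 W) * ‖s‖ :=
  grasp_dist_one_bound_general W D hW α β hα hβ s hs
end

section
/- Let W, D be n×n real matrices with nonnegative entries and let α, β ≥ 0 satisfy α ≤ 1/(4‖W‖₁) and β ≤ 1/(4‖D‖₁). Then the GRASP operator G maps the set S = {s ∈ ℝ^n : ‖s − 1‖_∞ ≤ 1} into itself: for every s ∈ S, ‖G(s) − 1‖_∞ ≤ 1. -/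
open Finset

lemma grasp_aux {n : ℕ} (A : Matrix (Fin n) (Fin n) ℝ)
    (hA : ∀ i j, 0 ≤ A i j) (γ : ℝ) (hγ : 0 ≤ γ)
    (hγ' : γ ≤ 1 / (4 * matNorm1 A)) (s : Fin n → ℝ)
    (hs0 : ∀ k, 0 ≤ s k) (hs2 : ∀ k, s k ≤ 2) (i : Fin n) :
    0 ≤ γ * ∑ k, A k i * s k ∧ γ * ∑ k, A k i * s k ≤ 1/2 := by
  have hsum0 : (0:ℝ) ≤ ∑ k, A k i * s k :=
    Finset.sum_nonneg fun k _ => mul_nonneg (hA k i) (hs0 k)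
  have hcol : ∑ k, A k i * s k ≤ 2 * matNorm1 A := by
    have h1 : ∑ k, A k i * s k ≤ ∑ k, A k i * 2 :=
      Finset.sum_le_sum fun k _ => mul_le_mul_of_nonneg_left (hs2 k) (hA k i)
    have h2 : ∑ k, |A k i| ≤ matNorm1 A := by
      unfold matNorm1
      exact le_ciSup (Set.Finite.bddAbove (Set.finite_range fun j => ∑ k, |A k j|)) i
    calc ∑ k, A k i * s k ≤ ∑ k, A k i * 2 := h1
      _ = 2 * ∑ k, |A k i| := by
          rw [Finset.mul_sum]; congr 1; ext k; rw [abs_of_nonneg (hA k i)]; ring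
      _ ≤ 2 * matNorm1 A := by linarith
  refine ⟨mul_nonneg hγ hsum0, ?_⟩
  have hN : 0 ≤ matNorm1 A := by
    by_cases hn : n = 0
    · subst hn
      simp [matNorm1, Real.iSup_of_isEmpty]
    · obtain ⟨j⟩ := Fin.pos_iff_nonempty.mp (Nat.pos_of_ne_zero hn)
      unfold matNorm1
      exact le_trans (Finset.sum_nonneg fun k _ => abs_nonneg (A k j))
        (le_ciSup (Set.Finite.bddAbove (Set.finite_range fun j => ∑ k, |A k j|)) j)
  rcases eq_or_lt_of_le hN with h0 | h0
  · have : ∑ k, A k i * s k = 0 := le_antisymm (by rw [← h0] at hcol; linarith) hsum0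
    rw [this]; norm_num
  · have hγ2 : γ ≤ 1 / (4 * matNorm1 A) := hγ'
    calc γ * ∑ k, A k i * s k ≤ (1 / (4 * matNorm1 A)) * (2 * matNorm1 A) := by
          apply mul_le_mul hγ2 hcol hsum0
          positivity
      _ = 1/2 := by field_simp; ring
  
/-- Invariance: for nonnegative `W, D` and `α ≤ 1/(4‖W‖₁)`, `β ≤ 1/(4‖D‖₁)`, the GRASP
operator maps `S = {s : ‖s - 1‖_∞ ≤ 1}` into itself. -/
theorem grasp_invariance {n : ℕ} (W D : Matrix (Fin n) (Fin n) ℝ)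
    (hW : ∀ i j, 0 ≤ W i j) (hD : ∀ i j, 0 ≤ D i j)
    (α β : ℝ) (hα : 0 ≤ α) (hβ : 0 ≤ β)
    (hα' : α ≤ 1 / (4 * matNorm1 W)) (hβ' : β ≤ 1 / (4 * matNorm1 D))
    (s : Fin n → ℝ) (hs : ‖s - 1‖ ≤ 1) :
    ‖grasp W D α β s - 1‖ ≤ 1 := by
  have hk : ∀ k, |s k - 1| ≤ 1 := fun k => by
    have := norm_le_pi_norm (s - 1) k
    simpa using this.trans hs
  have hs0 : ∀ k, 0 ≤ s k := fun k => by have := abs_le.mp (hk k); linarith [this.1]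
  have hs2 : ∀ k, s k ≤ 2 := fun k => by have := abs_le.mp (hk k); linarith [this.2]
  rw [pi_norm_le_iff_of_nonneg zero_le_one]
  intro i
  obtain ⟨hw0, hw1⟩ := grasp_aux W hW α hα hα' s hs0 hs2 i
  obtain ⟨hd0, hd1⟩ := grasp_aux D hD β hβ hβ' s hs0 hs2 i
  simp only [Pi.sub_apply, Pi.one_apply, Real.norm_eq_abs, grasp]
  rw [abs_le]
  have hden : (0:ℝ) < 1 + α * ∑ k, W k i * s k := by linarith
  constructor
  · have : (0:ℝ) ≤ (1 + β * ∑ k, D k i * s k) / (1 + α * ∑ k, W k i * s k) :=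
      div_nonneg (by linarith) hden.le
    linarith
  · rw [sub_le_iff_le_add, div_le_iff₀ hden]
    linarith
end

section
/- Let W, D be n×n real matrices with nonnegative entries and let α, β ≥ 0 satisfy α ≤ 1/(4‖W‖₁) and β ≤ 1/(4‖D‖₁). Then for all x, y ∈ S = {s ∈ ℝ^n : ‖s − 1‖_∞ ≤ 1}, the GRASP operator satisfies ‖G(x) − G(y)‖_∞ ≤ (3/4)·‖x − y‖_∞; in particular G is a contraction on S with factor at most 3/4. -/
/-!
On `S` every coordinate lies in `[0, 2]`, so the scaled column sums `p = α (Wᵀ s)_i` and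
`q = β (Dᵀ s)_i` lie in `[0, 1/2]` and move by at most `‖x - y‖_∞ / 4` between `x` and `y`.
Writing `(1+q)/(1+p) - (1+q')/(1+p')` over the common denominator `(1+p)(1+p') ≥ 1`, the
numerator `(q-q')(1+p') - (1+q')(p-p')` is at most `(3/2 + 3/2) · ‖x - y‖_∞ / 4`.
-/

open Finset

lemma mul_le_one_div_of_le_one_div_mul {c k M : ℝ} (hk : 0 < k) (hM : 0 ≤ M)
    (h : c ≤ 1 / (k * M)) : c * M ≤ 1 / k := by
  rcases hM.eq_or_lt with rfl | hM
  · simpa using hk.le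
  · calc c * M ≤ 1 / (k * M) * M := by gcongr
      _ = 1 / k := by field_simp

lemma mem_Icc_of_norm_sub_one_le_one {ι : Type*} [Fintype ι] {s : ι → ℝ}
    (hs : ‖s - 1‖ ≤ 1) (k : ι) : s k ∈ Set.Icc 0 2 := by
  have hk : |s k - 1| ≤ 1 := (norm_le_pi_norm (s - 1) k).trans hs
  constructor <;> linarith [abs_le.1 hk]

lemma sum_mul_mem_Icc {ι : Type*} [Fintype ι] {w s : ι → ℝ} {b : ℝ} (hw : ∀ k, 0 ≤ w k)
    (hs : ∀ k, s k ∈ Set.Icc 0 b) : ∑ k, w k * s k ∈ Set.Icc 0 (b * ∑ k, w k) := by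
  rw [mul_sum]
  exact ⟨sum_nonneg fun k _ => mul_nonneg (hw k) (hs k).1,
    sum_le_sum fun k _ => by rw [mul_comm b]; exact mul_le_mul_of_nonneg_left (hs k).2 (hw k)⟩

lemma abs_sum_mul_sub_sum_mul_le {ι : Type*} [Fintype ι] (w x y : ι → ℝ) :
    |∑ k, w k * x k - ∑ k, w k * y k| ≤ (∑ k, |w k|) * ‖x - y‖ := by
  rw [← sum_sub_distrib, sum_mul]
  refine (abs_sum_le_sum_abs _ _).trans (sum_le_sum fun k _ => ?_)
  rw [← mul_sub, abs_mul]
  exact mul_le_mul_of_nonneg_left (norm_le_pi_norm (x - y) k) (abs_nonneg _)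

lemma abs_one_add_div_one_add_sub_le {p p' q q' ε : ℝ}
    (hp : p ∈ Set.Icc 0 (1 / 2)) (hp' : p' ∈ Set.Icc 0 (1 / 2))
    (hq' : q' ∈ Set.Icc 0 (1 / 2)) (hpp' : |p - p'| ≤ ε) (hqq' : |q - q'| ≤ ε) :
    |(1 + q) / (1 + p) - (1 + q') / (1 + p')| ≤ 3 * ε := by
  obtain ⟨hp0, -⟩ := hp
  obtain ⟨hp'0, hp'1⟩ := hp'
  obtain ⟨hq'0, hq'1⟩ := hq'
  have hε : 0 ≤ ε := (abs_nonneg _).trans hpp'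
  have hden : 1 ≤ (1 + p) * (1 + p') := by nlinarith
  have hnum : |(1 + q) * (1 + p') - (1 + p) * (1 + q')| ≤ 3 * ε :=
    calc |(1 + q) * (1 + p') - (1 + p) * (1 + q')|
        = |(q - q') * (1 + p') - (1 + q') * (p - p')| := by ring_nf
      _ ≤ |q - q'| * (1 + p') + (1 + q') * |p - p'| := by
          refine (abs_sub _ _).trans_eq ?_
          rw [abs_mul, abs_mul, abs_of_pos (by linarith : 0 < 1 + p'),
            abs_of_pos (by linarith : 0 < 1 + q')]
      _ ≤ ε * (3 / 2) + 3 / 2 * ε := by gcongr <;> linarith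
      _ = 3 * ε := by ring
  rw [div_sub_div _ _ (by linarith) (by linarith), abs_div, abs_of_pos (one_pos.trans_le hden)]
  exact (div_le_self (abs_nonneg _) hden).trans hnum

section ColumnSum

variable {n : ℕ} {A : Matrix (Fin n) (Fin n) ℝ} {c : ℝ}

lemma mul_column_sum_mem_Icc (hA : ∀ i j, 0 ≤ A i j) (hc : 0 ≤ c)
    (hcA : c * matNorm1 A ≤ 1 / 4) (i : Fin n) {s : Fin n → ℝ} (hs : ‖s - 1‖ ≤ 1) :
    c * ∑ k, A k i * s k ∈ Set.Icc 0 (1 / 2) := by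
  obtain ⟨h0, h2⟩ := sum_mul_mem_Icc (fun k => hA k i) (mem_Icc_of_norm_sub_one_le_one hs)
  have hcol : ∑ k, A k i ≤ matNorm1 A := by
    simpa only [abs_of_nonneg (hA _ i)] using sum_abs_le_matNorm1 A i
  refine ⟨mul_nonneg hc h0, ?_⟩
  calc c * ∑ k, A k i * s k ≤ c * (2 * matNorm1 A) := by gcongr; linarith
    _ ≤ 1 / 2 := by linarith

lemma abs_mul_column_sum_sub_le (hc : 0 ≤ c) (hcA : c * matNorm1 A ≤ 1 / 4) (i : Fin n)
    (x y : Fin n → ℝ) :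
    |c * ∑ k, A k i * x k - c * ∑ k, A k i * y k| ≤ ‖x - y‖ / 4 := by
  rw [← mul_sub, abs_mul, abs_of_nonneg hc]
  calc c * |∑ k, A k i * x k - ∑ k, A k i * y k|
      ≤ c * (matNorm1 A * ‖x - y‖) := by
        gcongr
        exact (abs_sum_mul_sub_sum_mul_le _ x y).trans (by gcongr; exact sum_abs_le_matNorm1 A i)
    _ ≤ ‖x - y‖ / 4 := by nlinarith [norm_nonneg (x - y)]

end ColumnSum

/-- Contraction: for nonnegative `W, D` and `α ≤ 1/(4‖W‖₁)`, `β ≤ 1/(4‖D‖₁)`, the GRASP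
operator is a contraction with factor `3/4` on `S = {s : ‖s - 1‖_∞ ≤ 1}`. -/
theorem grasp_contraction {n : ℕ} (W D : Matrix (Fin n) (Fin n) ℝ)
    (hW : ∀ i j, 0 ≤ W i j) (hD : ∀ i j, 0 ≤ D i j)
    (α β : ℝ) (hα : 0 ≤ α) (hβ : 0 ≤ β)
    (hα' : α ≤ 1 / (4 * matNorm1 W)) (hβ' : β ≤ 1 / (4 * matNorm1 D))
    (x y : Fin n → ℝ) (hx : ‖x - 1‖ ≤ 1) (hy : ‖y - 1‖ ≤ 1) :
    ‖grasp W D α β x - grasp W D α β y‖ ≤ (3 / 4) * ‖x - y‖ := by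
  have hαW := mul_le_one_div_of_le_one_div_mul four_pos (matNorm1_nonneg W) hα'
  have hβD := mul_le_one_div_of_le_one_div_mul four_pos (matNorm1_nonneg D) hβ'
  refine (pi_norm_le_iff_of_nonneg (by positivity)).2 fun i => ?_
  calc |grasp W D α β x i - grasp W D α β y i|
      ≤ 3 * (‖x - y‖ / 4) :=
        abs_one_add_div_one_add_sub_le (mul_column_sum_mem_Icc hW hα hαW i hx)
          (mul_column_sum_mem_Icc hW hα hαW i hy) (mul_column_sum_mem_Icc hD hβ hβD i hy)
          (abs_mul_column_sum_sub_le hα hαW i x y) (abs_mul_column_sum_sub_le hβ hβD i x y)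
    _ = 3 / 4 * ‖x - y‖ := by ring
end
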